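/- Let a > 0 and b > 0 be real numbers, and let t : ℝ → ℝ be a function such that for every N > 0 one has 0 < t(N) < N and a·g(t(N)/a) = b·g((N−t(N))/b), where g(x) = (x+1)·log(x+1) − x·log(x). Then the function F defined on (0, ∞) by F(N) = a·g(t(N)/a) is concave and strictly monotonically increasing on (0, ∞). -/

import Mathlib

/-- `g x = (x+1) log(x+1) - x log x`, the von Neumann entropy of a single-mode
thermal state with mean photon number `x` (with the convention `0 * log 0 = 0`,
which holds since `Real.log 0 = 0`). -/
noncomputable def g (x : ℝ) : ℝ := (x + 1) * Real.log (x + 1) - x * Real.log x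

lemma g_continuous : Continuous g := by
  have h1 : Continuous fun x : ℝ => (x + 1) * Real.log (x + 1) :=
    Real.continuous_mul_log.comp (continuous_id.add continuous_const)
  exact h1.sub Real.continuous_mul_log

lemma hasDerivAt_g {x : ℝ} (hx : 0 < x) :
    HasDerivAt g (Real.log (x + 1) - Real.log x) x := by
  have h1 : HasDerivAt (fun y : ℝ => (y + 1) * Real.log (y + 1))
      (Real.log (x + 1) + 1) x := by
    have := ((Real.hasDerivAt_log (by linarith : x + 1 ≠ 0)).comp x
      ((hasDerivAt_id x).add_const 1))
    have := (((hasDerivAt_id x).add_const 1).mul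
      ((Real.hasDerivAt_log (by linarith : x + 1 ≠ 0)).comp x
        ((hasDerivAt_id x).add_const 1)))
    refine this.congr_deriv ?_
    field_simp
    simp only [Function.comp_apply, id]
    ring
  have h2 : HasDerivAt (fun y : ℝ => y * Real.log y) (Real.log x + 1) x := by
    have := (hasDerivAt_id x).mul (Real.hasDerivAt_log hx.ne')
    refine this.congr_deriv ?_
    field_simp
    simp only [Function.comp_apply, id]
    ring
  have := h1.sub h2
  refine this.congr_deriv ?_
  ring

lemma deriv_g {x : ℝ} (hx : 0 < x) :
    deriv g x = Real.log (x + 1) - Real.log x := (hasDerivAt_g hx).deriv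

lemma g_strictMonoOn : StrictMonoOn g (Set.Ici (0 : ℝ)) := by
  apply strictMonoOn_of_deriv_pos (convex_Ici 0) g_continuous.continuousOn
  intro x hx
  rw [interior_Ici] at hx
  rw [deriv_g hx]
  have := Real.log_lt_log hx (by linarith : x < x + 1)
  linarith

lemma g_concaveOn : ConcaveOn ℝ (Set.Ici (0 : ℝ)) g := by
  apply AntitoneOn.concaveOn_of_deriv (convex_Ici 0) g_continuous.continuousOn
  · rw [interior_Ici]
    exact fun x hx => (hasDerivAt_g hx).differentiableAt.differentiableWithinAt
  · rw [interior_Ici]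
    intro x hx y hy hxy
    rw [deriv_g hx, deriv_g hy]
    rw [Set.mem_Ioi] at hx hy
    have h1 : Real.log (y + 1) + Real.log x ≤ Real.log (x + 1) + Real.log y := by
      rw [← Real.log_mul (by linarith) hx.ne', ← Real.log_mul (by linarith) hy.ne']
      apply Real.log_le_log (by positivity)
      nlinarith
    linarith

lemma comb_pos {p q x y : ℝ} (hp : 0 ≤ p) (hq : 0 ≤ q) (hpq : p + q = 1)
    (hx : 0 < x) (hy : 0 < y) : 0 < p * x + q * y := by
  rcases hp.eq_or_lt with h | h
  · have hq1 : q = 1 := by linarith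
    rw [← h, hq1]; simpa using hy
  · nlinarith [mul_nonneg hq hy.le, mul_pos h hx]

set_option maxHeartbeats 1600000 in
/-- The function `F(N) = a g(t(N)/a)`, where `t(N) = N_A*(N)` solves Eq. (4),
is concave and strictly monotonically increasing on `(0, ∞)`. -/
theorem F_concave_strictMono (a b : ℝ) (ha : 0 < a) (hb : 0 < b) (t : ℝ → ℝ)
    (ht : ∀ N : ℝ, 0 < N →
      0 < t N ∧ t N < N ∧ a * g (t N / a) = b * g ((N - t N) / b)) :
    ConcaveOn ℝ (Set.Ioi (0 : ℝ)) (fun N => a * g (t N / a)) ∧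
    StrictMonoOn (fun N => a * g (t N / a)) (Set.Ioi (0 : ℝ)) := by
  constructor
  · refine ⟨convex_Ioi 0, ?_⟩
    intro x hx y hy p q hp hq hpq
    rw [Set.mem_Ioi] at hx hy
    obtain ⟨htx0, htxx, hbalx⟩ := ht x hx
    obtain ⟨hty0, htyy, hbaly⟩ := ht y hy
    simp only [smul_eq_mul]
    obtain ⟨N, hN⟩ : ∃ N : ℝ, p * x + q * y = N := ⟨_, rfl⟩
    rw [hN]
    have hN0 : 0 < N := hN ▸ comb_pos hp hq hpq hx hy
    obtain ⟨htN0, htNN, hbalN⟩ := ht N hN0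
    obtain ⟨tb, htb⟩ : ∃ tb : ℝ, p * t x + q * t y = tb := ⟨_, rfl⟩
    have htb0 : 0 ≤ tb := by rw [← htb]; positivity
    have htbN : tb < N := by
      have hc := comb_pos hp hq hpq (by linarith : 0 < x - t x) (by linarith : 0 < y - t y)
      have hexp : p * (x - t x) + q * (y - t y) = N - tb := by rw [← hN, ← htb]; ring
      linarith
    -- concavity of g gives the two bounds at the convex-combination photon number tb
    have hA : p * (a * g (t x / a)) + q * (a * g (t y / a)) ≤ a * g (tb / a) := by
      have hcc := g_concaveOn.2 (Set.mem_Ici.mpr (le_of_lt (by positivity : (0:ℝ) < t x / a)))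
        (Set.mem_Ici.mpr (le_of_lt (by positivity : (0:ℝ) < t y / a))) hp hq hpq
      have harg : p • (t x / a) + q • (t y / a) = tb / a := by
        simp only [smul_eq_mul]
        rw [← htb]
        field_simp
      rw [harg] at hcc
      simp only [smul_eq_mul] at hcc
      nlinarith [mul_le_mul_of_nonneg_left hcc ha.le]
    have hB : p * (a * g (t x / a)) + q * (a * g (t y / a)) ≤ b * g ((N - tb) / b) := by
      have hx1 : (0:ℝ) ≤ (x - t x) / b := div_nonneg (by linarith) hb.le
      have hy1 : (0:ℝ) ≤ (y - t y) / b := div_nonneg (by linarith) hb.le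
      have hcc := g_concaveOn.2 (Set.mem_Ici.mpr hx1) (Set.mem_Ici.mpr hy1) hp hq hpq
      have harg : p • ((x - t x) / b) + q • ((y - t y) / b) = (N - tb) / b := by
        simp only [smul_eq_mul]
        rw [← hN, ← htb]
        field_simp
        ring
      rw [harg] at hcc
      simp only [smul_eq_mul] at hcc
      rw [hbalx, hbaly]
      nlinarith [mul_le_mul_of_nonneg_left hcc hb.le]
    -- compare t N with tb
    have hgmono := g_strictMonoOn.monotoneOn
    rcases le_total tb (t N) with h | h
    · have hgle : g (tb / a) ≤ g (t N / a) := by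
        apply hgmono (Set.mem_Ici.mpr (div_nonneg htb0 ha.le))
          (Set.mem_Ici.mpr (div_nonneg htN0.le ha.le))
        exact div_le_div_of_nonneg_right h ha.le
      nlinarith [mul_le_mul_of_nonneg_left hgle ha.le]
    · have hNtb0 : 0 ≤ (N - tb) / b := div_nonneg (by linarith) hb.le
      have hgle : g ((N - tb) / b) ≤ g ((N - t N) / b) := by
        apply hgmono (Set.mem_Ici.mpr hNtb0)
          (Set.mem_Ici.mpr (div_nonneg (by linarith) hb.le))
        exact div_le_div_of_nonneg_right (by linarith) hb.le
      rw [hbalN]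
      nlinarith [mul_le_mul_of_nonneg_left hgle hb.le]
  · intro x hx y hy hxy
    rw [Set.mem_Ioi] at hx hy
    obtain ⟨htx0, htxx, hbalx⟩ := ht x hx
    obtain ⟨hty0, htyy, hbaly⟩ := ht y hy
    show a * g (t x / a) < a * g (t y / a)
    by_contra hle
    push_neg at hle
    -- a g(ty/a) ≤ a g(tx/a) implies ty ≤ tx
    have h1 : t y ≤ t x := by
      by_contra hlt
      push_neg at hlt
      have hgs := g_strictMonoOn (Set.mem_Ici.mpr (by positivity : (0:ℝ) ≤ t x / a))
        (Set.mem_Ici.mpr (by positivity : (0:ℝ) ≤ t y / a))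
        (by gcongr : t x / a < t y / a)
      nlinarith [mul_lt_mul_of_pos_left hgs ha]
    have h2 : y - t y ≤ x - t x := by
      by_contra hlt
      push_neg at hlt
      have hgs := g_strictMonoOn
        (Set.mem_Ici.mpr (div_nonneg (by linarith) hb.le : (0:ℝ) ≤ (x - t x) / b))
        (Set.mem_Ici.mpr (div_nonneg (by linarith) hb.le))
        (by gcongr : (x - t x) / b < (y - t y) / b)
      nlinarith [mul_lt_mul_of_pos_left hgs hb]
    linarith
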